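/- arXiv:0803.1659 — 2 statements merged into one kernel-verified Lean document; each statement's English description precedes it below -/
import Mathlib

section
/- Let P(z) = Σ_j c_j z^j and K(z) = Σ_{j=0}^d C(d,j) u_j z^j be complex polynomials with deg P ≤ d, and let Q(z) = Σ_{j=0}^d u_j c_j z^j. Fix κ > 0 and ρ > 0. If P has no zeros in the open disk {|z| < ρ} and K has no zeros in the open disk {|z| < κ}, then either Q ≡ 0 or Q has no zeros in the open disk {|z| < κρ}. -/
/-!
Induction on the degree bound, as in the classical proof of Grace's theorem. The analytic input
is Laguerre's theorem: if `P` has degree at most `m`, no zeros in `|z| < ρ`, and `|ζ| < ρ`, then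
the polar derivative `m P + (ζ - z) P'` has no zeros there either. Indeed `z ↦ 1 / (w - z)` maps
`|z| ≥ ρ` (and `∞ ↦ 0`) into a closed disk, and a zero `w` of the polar derivative would make
`1 / (w - ζ)` the average of the images of the `m` zeros of `P`, counting those at infinity.

For the step, factor `K = (a X - b) L` with `κ |a| ≤ |b|`, splitting off a zero of `K` outside
the disk (possibly at infinity). Binomial identities show that at `z` the composition of `P` and
`K` is a multiple of the composition of `L` with the polar derivative of `P` at `ζ = -a z / b`,
and `|ζ| < ρ` as soon as `|z| < κ ρ`.
-/

open Polynomial Finset Pointwise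

theorem Convex.multiset_sum_mem_smul {𝕜 E : Type*} [Field 𝕜] [LinearOrder 𝕜]
    [IsStrictOrderedRing 𝕜] [AddCommGroup E] [Module 𝕜 E] {s : Set E} (hs : Convex 𝕜 s)
    (h0 : (0 : E) ∈ s) {M : Multiset E} (hM : ∀ x ∈ M, x ∈ s) {m : ℕ}
    (hm : Multiset.card M ≤ m) : M.sum ∈ (m : 𝕜) • s := by
  induction M using Multiset.induction_on generalizing m with
  | empty => simpa using Set.smul_mem_smul_set (a := (m : 𝕜)) h0
  | cons x M ih =>
    obtain ⟨m, rfl⟩ : ∃ k, m = k + 1 := Nat.exists_eq_add_one.mpr (by simp at hm; omega)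
    rw [Multiset.sum_cons, Nat.cast_add_one, add_comm (m : 𝕜),
      hs.add_smul zero_le_one m.cast_nonneg, one_smul]
    exact Set.add_mem_add (hM x (Multiset.mem_cons_self x M))
      (ih (fun y hy => hM y (Multiset.mem_cons_of_mem hy)) (by simpa using hm))

theorem norm_smul_add_conj_sq_sub (ρ : ℝ) (w s : ℂ) :
    ‖(ρ ^ 2 - ‖w‖ ^ 2) • s + starRingEnd ℂ w‖ ^ 2 - ρ ^ 2 =
      (ρ ^ 2 - ‖w‖ ^ 2) * (ρ ^ 2 * ‖s‖ ^ 2 - ‖w * s - 1‖ ^ 2) := by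
  simp only [Complex.sq_norm, Complex.normSq_apply, Complex.real_smul, Complex.add_re,
    Complex.add_im, Complex.mul_re, Complex.mul_im, Complex.sub_re, Complex.sub_im,
    Complex.ofReal_re, Complex.ofReal_im, Complex.conj_re, Complex.conj_im, Complex.one_re,
    Complex.one_im]
  ring

theorem convex_setOf_mul_norm_le_norm_mul_sub_one {ρ : ℝ} {w : ℂ} (hw : ‖w‖ < ρ) :
    Convex ℝ {s : ℂ | ρ * ‖s‖ ≤ ‖w * s - 1‖} := by
  set A : ℝ := ρ ^ 2 - ‖w‖ ^ 2
  have hA : 0 < A := by have := norm_nonneg w; nlinarith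
  have hρ : 0 < ρ := (norm_nonneg w).trans_lt hw
  suffices {s : ℂ | ρ * ‖s‖ ≤ ‖w * s - 1‖} =
      Metric.closedBall (-(A⁻¹ • starRingEnd ℂ w)) (ρ / A) by
    rw [this]
    exact convex_closedBall _ _
  ext s
  have key :
      ‖A • s + starRingEnd ℂ w‖ ^ 2 - ρ ^ 2 = A * (ρ ^ 2 * ‖s‖ ^ 2 - ‖w * s - 1‖ ^ 2) :=
    norm_smul_add_conj_sq_sub ρ w s
  have hdist : ‖s - -(A⁻¹ • starRingEnd ℂ w)‖ = ‖A • s + starRingEnd ℂ w‖ / A := by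
    rw [sub_neg_eq_add, eq_div_iff hA.ne', mul_comm, ← Real.norm_of_nonneg hA.le, ← norm_smul,
      Real.norm_of_nonneg hA.le, smul_add, smul_inv_smul₀ hA.ne']
  rw [Set.mem_ofPred_eq, Metric.mem_closedBall, dist_eq_norm, hdist,
    div_le_div_iff_of_pos_right hA,
    ← sq_le_sq₀ (mul_nonneg hρ.le (norm_nonneg s)) (norm_nonneg _),
    ← sq_le_sq₀ (norm_nonneg (A • s + _)) hρ.le]
  constructor <;> intro h <;> nlinarith

theorem mul_norm_one_div_sub_le_iff {ρ : ℝ} {w z : ℂ} (hzw : z ≠ w) :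
    ρ * ‖1 / (w - z)‖ ≤ ‖w * (1 / (w - z)) - 1‖ ↔ ρ ≤ ‖z‖ := by
  have hwz : 0 < ‖w - z‖ := norm_pos_iff.mpr (sub_ne_zero.mpr hzw.symm)
  have : w * (1 / (w - z)) - 1 = z / (w - z) := by
    field_simp [sub_ne_zero.mpr hzw.symm]
    ring
  rw [this, norm_div, norm_div, norm_one, mul_one_div, div_le_div_iff_of_pos_right hwz]

namespace Polynomial

section Semiring

variable {R : Type*} [Semiring R]

theorem coeff_sum_range_C_mul_X_pow (f : ℕ → R) (d j : ℕ) :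
    (∑ i ∈ range (d + 1), C (f i) * X ^ i).coeff j = if j ≤ d then f j else 0 := by
  simp [finsetSum_coeff]

theorem natDegree_sum_range_C_mul_X_pow_le (f : ℕ → R) (d : ℕ) :
    (∑ i ∈ range (d + 1), C (f i) * X ^ i).natDegree ≤ d :=
  natDegree_le_iff_coeff_eq_zero.mpr fun j hj => by
    rw [coeff_sum_range_C_mul_X_pow, if_neg (by exact_mod_cast hj.not_ge)]

end Semiring

section CommRing

variable {R : Type*} [CommRing R]

noncomputable def polarDerivative (m : ℕ) (ζ : R) (P : R[X]) : R[X] :=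
  C (m : R) * P + (C ζ - X) * derivative P

theorem eval_polarDerivative (m : ℕ) (ζ : R) (P : R[X]) (w : R) :
    (polarDerivative m ζ P).eval w = m * P.eval w + (ζ - w) * (derivative P).eval w := by
  simp [polarDerivative]

theorem coeff_polarDerivative (m : ℕ) (ζ : R) (P : R[X]) (k : ℕ) :
    (polarDerivative m ζ P).coeff k = (m - k) * P.coeff k + ζ * (k + 1) * P.coeff (k + 1) := by
  rcases k with _ | k
  · simp [polarDerivative, coeff_derivative]
  · simp [polarDerivative, coeff_derivative, sub_mul, coeff_X_mul]
    ring

theorem natDegree_polarDerivative_le {n : ℕ} (ζ : R) {P : R[X]} (hP : P.natDegree ≤ n + 1) :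
    (polarDerivative (n + 1) ζ P).natDegree ≤ n := by
  refine natDegree_le_iff_coeff_eq_zero.mpr fun k hk => ?_
  have hk' : n + 1 ≤ k := by exact_mod_cast hk
  rw [coeff_polarDerivative, coeff_eq_zero_of_natDegree_lt (by omega : P.natDegree < k + 1)]
  rcases hk'.eq_or_lt with rfl | hlt
  · push_cast
    ring
  · rw [coeff_eq_zero_of_natDegree_lt (by omega)]
    ring

end CommRing

section Field

variable {F : Type*} [Field F]

/-- The Schur–Szegő composition of `P` and `K`, both regarded as polynomials of degree `n`. -/
noncomputable def schurSzego (n : ℕ) (P K : F[X]) : F[X] :=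
  ∑ j ∈ range (n + 1), C (K.coeff j * P.coeff j / n.choose j) * X ^ j

theorem eval_schurSzego (n : ℕ) (P K : F[X]) (z : F) :
    (schurSzego n P K).eval z =
      ∑ j ∈ range (n + 1), K.coeff j * P.coeff j / n.choose j * z ^ j := by
  simp [schurSzego, eval_finsetSum]

theorem eval_schurSzego_C_mul_X_sub_C_mul (n : ℕ) (P L : F[X]) (a b z : F) :
    (schurSzego n P ((C a * X - C b) * L)).eval z =
      a * (schurSzego n P (X * L)).eval z - b * (schurSzego n P L).eval z := by
  simp only [eval_schurSzego, mul_sum, ← sum_sub_distrib, sub_mul, mul_assoc, coeff_sub,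
    coeff_C_mul]
  refine sum_congr rfl fun j _ => ?_
  ring

theorem eval_schurSzego_succ_X_mul (n : ℕ) (P L : F[X]) (z : F) :
    (schurSzego (n + 1) P (X * L)).eval z =
      ∑ k ∈ range (n + 1),
        L.coeff k * P.coeff (k + 1) / (n + 1).choose (k + 1) * z ^ (k + 1) := by
  rw [eval_schurSzego, sum_range_succ']
  simp [coeff_X_mul]

theorem eval_schurSzego_succ_of_natDegree_le {n : ℕ} (P : F[X]) {L : F[X]}
    (hL : L.natDegree ≤ n) (z : F) : (schurSzego (n + 1) P L).eval z =
      ∑ k ∈ range (n + 1), L.coeff k * P.coeff k / (n + 1).choose k * z ^ k := by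
  rw [eval_schurSzego, sum_range_succ, coeff_eq_zero_of_natDegree_lt (by omega), zero_mul,
    zero_div, zero_mul, add_zero]

theorem eval_schurSzego_polarDerivative [CharZero F] {n : ℕ} (P : F[X]) {L : F[X]}
    (hL : L.natDegree ≤ n) {a b ζ z : F} (hζ : b * ζ = -(a * z)) :
    -b * (schurSzego n (polarDerivative (n + 1) ζ P) L).eval z =
      (n + 1) * (schurSzego (n + 1) P ((C a * X - C b) * L)).eval z := by
  rw [eval_schurSzego_C_mul_X_sub_C_mul, eval_schurSzego_succ_X_mul,
    eval_schurSzego_succ_of_natDegree_le P hL, eval_schurSzego, mul_sum, mul_sum, mul_sum,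
    ← sum_sub_distrib, mul_sum]
  refine sum_congr rfl fun k hk => ?_
  have hkn : k ≤ n := Nat.lt_succ_iff.mp (mem_range.mp hk)
  have h₀ : (n.choose k : F) ≠ 0 := by exact_mod_cast (Nat.choose_pos hkn).ne'
  have h₁ : ((n + 1).choose k : F) ≠ 0 := by exact_mod_cast (Nat.choose_pos (by omega)).ne'
  have h₂ : ((n + 1).choose (k + 1) : F) ≠ 0 := by
    exact_mod_cast (Nat.choose_pos (by omega)).ne'
  have e₁ : ((n + 1 : ℕ) : F) * n.choose k = (n + 1).choose (k + 1) * (k + 1 : ℕ) := by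
    exact_mod_cast Nat.add_one_mul_choose_eq n k
  have e₂ : (n.choose k : F) * (n + 1 : ℕ) = (n + 1).choose k * (n + 1 - k : ℕ) := by
    exact_mod_cast Nat.choose_mul_succ_eq n k
  rw [coeff_polarDerivative]
  push_cast [Nat.cast_sub (by omega : k ≤ n + 1)] at e₁ e₂ ⊢
  field_simp
  linear_combination (-(k + 1) * P.coeff (k + 1) * L.coeff k * z ^ k * (n + 1).choose k *
      (n + 1).choose (k + 1)) * hζ - (a * z ^ (k + 1) * L.coeff k * P.coeff (k + 1) *
      (n + 1).choose k) * e₁ + (b * L.coeff k * P.coeff k * z ^ k * (n + 1).choose (k + 1)) * e₂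

end Field

end Polynomial

theorem eval_polarDerivative_ne_zero {m : ℕ} (hm : 0 < m) {P : ℂ[X]} (hdeg : P.natDegree ≤ m)
    {ρ : ℝ} (hP : ∀ z : ℂ, ‖z‖ < ρ → P.eval z ≠ 0) {ζ w : ℂ} (hζ : ‖ζ‖ < ρ)
    (hw : ‖w‖ < ρ) :
    (polarDerivative m ζ P).eval w ≠ 0 := by
  intro h
  rw [eval_polarDerivative, (IsAlgClosed.splits P).eval_derivative_eq_eval_mul_sum (hP w hw)] at h
  have hζw : ζ ≠ w := by
    rintro rfl
    simp [hm.ne', hP ζ hζ] at h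
  have hsum : (P.roots.map fun α => 1 / (w - α)).sum = (m : ℝ) • (1 / (w - ζ)) := by
    have : P.eval w * (m + (ζ - w) * (P.roots.map fun α => 1 / (w - α)).sum) = 0 := by
      linear_combination h
    rw [Complex.real_smul, Complex.ofReal_natCast]
    field_simp [sub_ne_zero.mpr hζw.symm]
    linear_combination (-1 : ℂ) * (mul_eq_zero.mp this).resolve_left (hP w hw)
  have hroots :
      ∀ s ∈ P.roots.map fun α => 1 / (w - α), s ∈ {s : ℂ | ρ * ‖s‖ ≤ ‖w * s - 1‖} := by
    simp only [Multiset.mem_map, mem_roots', IsRoot.def]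
    rintro _ ⟨α, ⟨-, hα⟩, rfl⟩
    exact (mul_norm_one_div_sub_le_iff (by rintro rfl; exact hP α hw hα)).mpr
      (not_lt.mp fun hlt => hP α hlt hα)
  have hmem := (convex_setOf_mul_norm_le_norm_mul_sub_one hw).multiset_sum_mem_smul (by simp)
    hroots ((Multiset.card_map _ _).trans_le ((card_roots' P).trans hdeg))
  rw [hsum, Set.smul_mem_smul_set_iff₀ (by exact_mod_cast hm.ne')] at hmem
  exact hζ.not_ge ((mul_norm_one_div_sub_le_iff hζw).mp hmem)

theorem exists_eq_C_mul_X_sub_C_mul {κ : ℝ} (hκ : 0 < κ) {n : ℕ} {K : ℂ[X]}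
    (hK : K.natDegree ≤ n + 1) (hKnv : ∀ z : ℂ, ‖z‖ < κ → K.eval z ≠ 0) :
    ∃ a b : ℂ, ∃ L : ℂ[X],
      K = (C a * X - C b) * L ∧ L.natDegree ≤ n ∧ b ≠ 0 ∧ κ * ‖a‖ ≤ ‖b‖ := by
  by_cases hKn : K.natDegree ≤ n
  · exact ⟨0, -1, K, by simp, hKn, by simp, by simp⟩
  have hdeg : K.natDegree = n + 1 := by omega
  obtain ⟨β, hβ⟩ :=
    Complex.exists_root (natDegree_pos_iff_degree_pos.mp (by rw [hdeg]; exact n.succ_pos))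
  have hκβ : κ ≤ ‖β‖ := not_lt.mp fun h => hKnv β h hβ
  refine ⟨1, β, K /ₘ (X - C β), by simpa using (mul_divByMonic_eq_iff_isRoot.mpr hβ).symm,
    ?_, norm_pos_iff.mp (hκ.trans_le hκβ), by simpa using hκβ⟩
  rw [natDegree_divByMonic _ (monic_X_sub_C β), natDegree_X_sub_C, hdeg, Nat.add_sub_cancel]

theorem eval_schurSzego_ne_zero {κ ρ : ℝ} (hκ : 0 < κ) {n : ℕ} {P K : ℂ[X]}
    (hP : P.natDegree ≤ n) (hK : K.natDegree ≤ n) (hPnv : ∀ z : ℂ, ‖z‖ < ρ → P.eval z ≠ 0)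
    (hKnv : ∀ z : ℂ, ‖z‖ < κ → K.eval z ≠ 0) {z : ℂ} (hz : ‖z‖ < κ * ρ) :
    (schurSzego n P K).eval z ≠ 0 := by
  have hρ : 0 < ρ := pos_of_mul_pos_right ((norm_nonneg z).trans_lt hz) hκ.le
  induction n generalizing P K with
  | zero =>
    simpa [eval_schurSzego, coeff_zero_eq_eval_zero] using
      ⟨hKnv 0 (by simpa using hκ), hPnv 0 (by simpa using hρ)⟩
  | succ n ih =>
    obtain ⟨a, b, L, rfl, hL, hb, hab⟩ := exists_eq_C_mul_X_sub_C_mul hκ hK hKnv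
    set ζ := -(a * z) / b
    have hζ : ‖ζ‖ < ρ := by
      rw [norm_div, norm_neg, norm_mul, div_lt_iff₀ (norm_pos_iff.mpr hb)]
      nlinarith [norm_nonneg a, norm_nonneg z, norm_pos_iff.mpr hb]
    have hLnv : ∀ w : ℂ, ‖w‖ < κ → L.eval w ≠ 0 := fun w hw h =>
      hKnv w hw (by simp [h])
    have hne := ih (natDegree_polarDerivative_le ζ hP) hL
      (fun w hw => eval_polarDerivative_ne_zero n.succ_pos hP hPnv hζ hw) hLnv
    have key := eval_schurSzego_polarDerivative P hL (a := a) (b := b) (ζ := ζ) (z := z)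
      (mul_div_cancel₀ _ hb)
    intro h
    rw [h, mul_zero] at key
    exact hne ((mul_eq_zero.mp key).resolve_left (neg_ne_zero.mpr hb))

theorem schur_szego_disk_general
    (d : ℕ) (c u : ℕ → ℂ) (κ ρ : ℝ) (hκ : 0 < κ)
    (P : Polynomial ℂ) (hP : P = ∑ j ∈ Finset.range (d + 1), Polynomial.C (c j) * Polynomial.X ^ j)
    (K : Polynomial ℂ) (hK : K = ∑ j ∈ Finset.range (d + 1),
      Polynomial.C ((d.choose j : ℂ) * u j) * Polynomial.X ^ j)
    (Q : Polynomial ℂ) (hQ : Q = ∑ j ∈ Finset.range (d + 1),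
      Polynomial.C (u j * c j) * Polynomial.X ^ j)
    (hPnv : ∀ z : ℂ, ‖z‖ < ρ → P.eval z ≠ 0)
    (hKnv : ∀ z : ℂ, ‖z‖ < κ → K.eval z ≠ 0) :
    Q = 0 ∨ ∀ z : ℂ, ‖z‖ < κ * ρ → Q.eval z ≠ 0 := by
  have hQ_eq : Q = schurSzego d P K := by
    ext j
    rw [hQ, schurSzego, coeff_sum_range_C_mul_X_pow, coeff_sum_range_C_mul_X_pow]
    split_ifs with hj
    · have : (d.choose j : ℂ) ≠ 0 := by exact_mod_cast (Nat.choose_pos hj).ne'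
      rw [hP, hK, coeff_sum_range_C_mul_X_pow, coeff_sum_range_C_mul_X_pow, if_pos hj, if_pos hj]
      field_simp
    · rfl
  right
  rw [hQ_eq]
  exact fun z hz => eval_schurSzego_ne_zero hκ (hP ▸ natDegree_sum_range_C_mul_X_pow_le _ _)
    (hK ▸ natDegree_sum_range_C_mul_X_pow_le _ _) hPnv hKnv hz

/-- Schur–Szegő composition, disk version (Proposition 2.5(b)). -/
theorem schur_szego_disk
    (d : ℕ) (c u : ℕ → ℂ) (κ ρ : ℝ) (hκ : 0 < κ) (hρ : 0 < ρ)
    (P : Polynomial ℂ) (hP : P = ∑ j ∈ Finset.range (d + 1), Polynomial.C (c j) * Polynomial.X ^ j)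
    (K : Polynomial ℂ) (hK : K = ∑ j ∈ Finset.range (d + 1),
      Polynomial.C ((d.choose j : ℂ) * u j) * Polynomial.X ^ j)
    (Q : Polynomial ℂ) (hQ : Q = ∑ j ∈ Finset.range (d + 1),
      Polynomial.C (u j * c j) * Polynomial.X ^ j)
    (hPnv : ∀ z : ℂ, ‖z‖ < ρ → P.eval z ≠ 0)
    (hKnv : ∀ z : ℂ, ‖z‖ < κ → K.eval z ≠ 0) :
    Q = 0 ∨ ∀ z : ℂ, ‖z‖ < κ * ρ → Q.eval z ≠ 0 :=
  schur_szego_disk_general d c u κ ρ hκ P hP K hK Q hQ hPnv hKnv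
end

section
/- Let G = (V,E) be a finite graph. Then every complex zero of the polynomial Σ_{H⊆E} y^{#H} / Π_{v∈V} C(deg(G,v), deg(H,v)) has modulus one, where the sum is over all spanning subgraphs H ⊆ E and C(·,·) denotes binomial coefficients. -/
/-!
By the symmetry `H ↦ Hᶜ`, the sum `F(z)` satisfies `F(z) = z ^ #E * F(z⁻¹)`, so it suffices to
show `F(z) ≠ 0` for `‖z‖ < 1`. Give every vertex `v` a variable `x v` and put `x v ^ deg(H,v)` in
place of the binomial weight: the sum becomes `∏ e, (1 + z * x (ε₁ e) * x (ε₂ e))`, which has no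
zero on the closed unit polydisc. The binomial weights are restored one vertex at a time. As a
polynomial `∑ cₖ x_vᵏ` of degree `≤ d = deg(G,v)`, restoring the weight at `v` produces
`∑ cₖ / C(d,k)`, and this equals `∑ cₖ ξᵏ` for some `‖ξ‖ ≤ 1` (a coincidence theorem of
Grace–Walsh–Szegő type). So nonvanishing on the polydisc is preserved at every step.
The coincidence comes from Laguerre's theorem on polar derivatives, iterated into the nonvanishing
of the symmetric polarization, which is then evaluated at points `ζ` with `eₖ(ζ) = 1` for all `k`.
-/

open Polynomial Finset

theorem Convex.inv_natCast_smul_multiset_sum_mem {E : Type*} [AddCommGroup E] [Module ℝ E]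
    {K : Set E} (hK : Convex ℝ K) (h0 : (0 : E) ∈ K) {M : Multiset E} (hM : ∀ x ∈ M, x ∈ K)
    {d : ℕ} (hd : Multiset.card M ≤ d) : (d : ℝ)⁻¹ • M.sum ∈ K := by
  classical
  rw [Multiset.sum_eq_sum_toEnumFinset]
  set t := M.toEnumFinset
  have hcard : #t ≤ d := (Multiset.card_toEnumFinset M).trans_le hd
  rcases t.eq_empty_or_nonempty with ht | ht
  · simpa [ht] using h0
  have htpos : (0 : ℝ) < #t := by exact_mod_cast ht.card_pos
  have hmean : ∑ p ∈ t, (#t : ℝ)⁻¹ • p.1 ∈ K :=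
    hK.sum_mem (fun _ _ => by positivity) (by simp [htpos.ne'])
      (fun p hp => hM p.1 (Multiset.mem_of_mem_toEnumFinset hp))
  have hscale : (d : ℝ)⁻¹ • ∑ p ∈ t, p.1 = (#t / d : ℝ) • ∑ p ∈ t, (#t : ℝ)⁻¹ • p.1 := by
    rw [← smul_sum, smul_smul]
    congr 1
    field_simp
  rw [hscale]
  refine hK.smul_mem_of_zero_mem h0 hmean ⟨by positivity, div_le_one_of_le₀ ?_ (by positivity)⟩
  exact_mod_cast hcard

theorem Complex.convex_setOf_norm_lt_norm_mul_sub_one {ξ : ℂ} (hξ : ‖ξ‖ ≤ 1) :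
    Convex ℝ {t : ℂ | ‖t‖ < ‖ξ * t - 1‖} := by
  have hsq : ConvexOn ℝ Set.univ (fun t : ℂ => (1 - ‖ξ‖ ^ 2) • ‖t‖ ^ 2) :=
    (convexOn_univ_norm.pow (fun _ _ => norm_nonneg _) 2).smul
      (sub_nonneg.2 (pow_le_one₀ (norm_nonneg ξ) hξ))
  have hlin : ConcaveOn ℝ Set.univ (fun t : ℂ => 1 - 2 * (ξ * t).re) :=
    (concaveOn_const 1 convex_univ).sub
      (((2 : ℝ) • (Complex.reLm.comp (LinearMap.mulLeft ℝ ξ))).convexOn convex_univ)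
  have hset : {t : ℂ | ‖t‖ < ‖ξ * t - 1‖} =
      {t | t ∈ Set.univ ∧ 0 < (1 - 2 * (ξ * t).re) - (1 - ‖ξ‖ ^ 2) • ‖t‖ ^ 2} := by
    ext t
    have hexp : ‖ξ * t - 1‖ ^ 2 = ‖ξ‖ ^ 2 * ‖t‖ ^ 2 - 2 * (ξ * t).re + 1 := by
      simp only [Complex.sq_norm, Complex.normSq_sub, Complex.normSq_mul, map_one, mul_one]
      ring
    rw [Set.mem_ofPred, Set.mem_ofPred, ← pow_lt_pow_iff_left₀ (norm_nonneg _) (norm_nonneg _)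
      two_ne_zero, hexp, smul_eq_mul]
    simp only [Set.mem_univ, true_and]
    constructor <;> intro h <;> linarith
  rw [hset]
  exact (hlin.sub hsq).convex_gt 0

theorem Complex.norm_inv_sub_lt_iff {ξ u : ℂ} (hu : u ≠ ξ) :
    ‖(ξ - u)⁻¹‖ < ‖ξ * (ξ - u)⁻¹ - 1‖ ↔ 1 < ‖u‖ := by
  have hne : ξ - u ≠ 0 := sub_ne_zero.2 hu.symm
  have hmob : ξ * (ξ - u)⁻¹ - 1 = u * (ξ - u)⁻¹ := by field_simp; ring
  rw [hmob, norm_mul, lt_mul_iff_one_lt_left (norm_pos_iff.2 (inv_ne_zero hne))]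

section PolarDerivative

variable {R : Type*} [CommRing R]

noncomputable def Polynomial.polarDeriv (n : ℕ) (w : R) (q : R[X]) : R[X] :=
  C (n : R) * q + (C w - X) * derivative q

theorem Polynomial.eval_polarDeriv (n : ℕ) (w : R) (q : R[X]) (u : R) :
    (q.polarDeriv n w).eval u = n * q.eval u + (w - u) * (derivative q).eval u := by
  simp [polarDeriv]

theorem Polynomial.coeff_polarDeriv (n : ℕ) (w : R) (q : R[X]) (k : ℕ) :
    (q.polarDeriv n w).coeff k = (n - k) * q.coeff k + w * (k + 1) * q.coeff (k + 1) := by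
  rcases k with _ | k
  · simp [polarDeriv, coeff_derivative]
  · simp only [polarDeriv, map_natCast, sub_mul, coeff_add, coeff_natCast_mul, coeff_sub,
      coeff_C_mul, coeff_derivative, Nat.cast_add, Nat.cast_one, coeff_X_mul]
    ring

theorem Polynomial.natDegree_polarDeriv_le {n : ℕ} (w : R) {q : R[X]} (hq : q.natDegree ≤ n + 1) :
    (q.polarDeriv (n + 1) w).natDegree ≤ n := by
  rw [natDegree_le_iff_coeff_eq_zero]
  intro k hk
  have hk' : q.coeff (k + 1) = 0 := coeff_eq_zero_of_natDegree_lt (by omega)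
  rw [coeff_polarDeriv, hk', mul_zero, add_zero]
  rcases (Nat.succ_le_of_lt hk).eq_or_lt with rfl | hlt
  · simp
  · rw [coeff_eq_zero_of_natDegree_lt (by omega), mul_zero]

end PolarDerivative

theorem Multiset.esymm_cons {R : Type*} [CommSemiring R] (a : R) (s : Multiset R) (k : ℕ) :
    (a ::ₘ s).esymm (k + 1) = s.esymm (k + 1) + a * s.esymm k := by
  simp [Multiset.esymm, Multiset.powersetCard_cons, Multiset.map_map,
    Multiset.sum_map_mul_left]

theorem Multiset.esymm_eq_zero_of_card_lt {R : Type*} [CommSemiring R] {s : Multiset R} {k : ℕ}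
    (hk : Multiset.card s < k) : s.esymm k = 0 := by
  simp [Multiset.esymm, Multiset.powersetCard_eq_empty k hk]

section Polarization

variable {K : Type*} [Field K]

/-- For `q.natDegree ≤ card s`, the symmetric multi-affine polarization of `q` evaluated at the
points of `s`. -/
noncomputable def Polynomial.polarization (q : K[X]) (s : Multiset K) : K :=
  ∑ k ∈ range (Multiset.card s + 1), q.coeff k / (Multiset.card s).choose k * s.esymm k

theorem Polynomial.inv_mul_coeff_polarDeriv_div_choose [CharZero K] (q : K[X]) (a : K) {n k : ℕ}
    (hk : k ≤ n) :
    (n + 1 : K)⁻¹ * ((q.polarDeriv (n + 1) a).coeff k / n.choose k) =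
      q.coeff k / (n + 1).choose k + a * (q.coeff (k + 1) / (n + 1).choose (k + 1)) := by
  have h1 : (n.choose k : K) * (n + 1) = (n + 1).choose k * (n + 1 - k) := by
    have := congrArg (Nat.cast : ℕ → K) (Nat.choose_mul_succ_eq n k)
    push_cast [Nat.cast_sub (by omega : k ≤ n + 1)] at this
    exact this
  have h2 : (n + 1 : K) * n.choose k = (n + 1).choose (k + 1) * (k + 1) := by
    exact_mod_cast Nat.add_one_mul_choose_eq n k
  have hc : (n.choose k : K) ≠ 0 := Nat.cast_ne_zero.2 (Nat.choose_pos hk).ne'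
  have hc1 : ((n + 1).choose k : K) ≠ 0 := Nat.cast_ne_zero.2 (Nat.choose_pos (by omega)).ne'
  have hc2 : ((n + 1).choose (k + 1) : K) ≠ 0 :=
    Nat.cast_ne_zero.2 (Nat.choose_pos (by omega)).ne'
  have hn : (n + 1 : K) ≠ 0 := by exact_mod_cast n.succ_ne_zero
  rw [coeff_polarDeriv]
  field_simp
  push_cast
  linear_combination (-q.coeff k * (n + 1).choose (k + 1)) * h1
    - (a * q.coeff (k + 1) * (n + 1).choose k) * h2

theorem Polynomial.polarization_cons [CharZero K] (q : K[X]) (a : K) (s : Multiset K) :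
    q.polarization (a ::ₘ s) =
      (Multiset.card s + 1 : K)⁻¹ * (q.polarDeriv (Multiset.card s + 1) a).polarization s := by
  set n := Multiset.card s with hn
  set A : ℕ → K := fun k => q.coeff k / (n + 1).choose k
  have htop : ∑ k ∈ range (n + 1), A k * s.esymm k =
      ∑ k ∈ range (n + 1), A (k + 1) * s.esymm (k + 1) + A 0 * s.esymm 0 := by
    rw [← sum_range_succ' (fun k => A k * s.esymm k), sum_range_succ _ (n + 1),
      Multiset.esymm_eq_zero_of_card_lt (Nat.lt_succ_self n), mul_zero, add_zero]
  rw [polarization, polarization, Multiset.card_cons, ← hn, mul_sum, sum_range_succ']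
  have hcoeff : ∀ k ∈ range (n + 1),
      (n + 1 : K)⁻¹ * ((q.polarDeriv (n + 1) a).coeff k / n.choose k * s.esymm k) =
        A k * s.esymm k + A (k + 1) * (a * s.esymm k) := by
    intro k hk
    rw [← mul_assoc, inv_mul_coeff_polarDeriv_div_choose q a (Nat.lt_succ_iff.1 (mem_range.1 hk))]
    ring
  rw [sum_congr rfl hcoeff, sum_add_distrib, htop]
  have he0 : ∀ t : Multiset K, t.esymm 0 = 1 := fun t => by simp [Multiset.esymm]
  simp only [A, Multiset.esymm_cons, he0, mul_add, sum_add_distrib]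
  ring

end Polarization

theorem Polynomial.eval_polarDeriv_ne_zero {n : ℕ} (hn : 0 < n) {q : ℂ[X]} (hq : q.natDegree ≤ n)
    (hq0 : ∀ u : ℂ, ‖u‖ ≤ 1 → q.eval u ≠ 0) {w ξ : ℂ} (hw : ‖w‖ ≤ 1) (hξ : ‖ξ‖ ≤ 1) :
    (q.polarDeriv n w).eval ξ ≠ 0 := by
  -- `u ↦ (ξ - u)⁻¹` maps the roots of `q` into the convex set `K ∋ 0`, and `w` outside it; a zero
  -- of the polar derivative would make `(ξ - w)⁻¹` an average of those images and `0`.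
  set K := {t : ℂ | ‖t‖ < ‖ξ * t - 1‖}
  have hroots : ∀ t ∈ q.roots.map fun ρ => 1 / (ξ - ρ), t ∈ K := by
    simp only [Multiset.mem_map, one_div]
    rintro _ ⟨ρ, hρ, rfl⟩
    have hρ' : 1 < ‖ρ‖ := not_le.1 fun h => hq0 ρ h (isRoot_of_mem_roots hρ)
    exact (Complex.norm_inv_sub_lt_iff (fun h => by rw [h] at hρ'; linarith)).2 hρ'
  have hmean := (Complex.convex_setOf_norm_lt_norm_mul_sub_one hξ).inv_natCast_smul_multiset_sum_mem
    (by simp) hroots ((Multiset.card_map _ _).trans_le ((card_roots' q).trans hq))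
  intro h
  have hqξ := hq0 ξ hξ
  rw [eval_polarDeriv, (IsAlgClosed.splits q).eval_derivative_eq_eval_mul_sum hqξ] at h
  set S := (q.roots.map fun ρ => 1 / (ξ - ρ)).sum
  have hS : (n : ℂ) + (w - ξ) * S = 0 := by
    apply mul_left_cancel₀ hqξ
    linear_combination h
  have hwξ : w ≠ ξ := by
    rintro rfl
    simp only [sub_self, zero_mul, add_zero, Nat.cast_eq_zero] at hS
    omega
  have hmean' : (n : ℝ)⁻¹ • S = (ξ - w)⁻¹ := by
    rw [Complex.real_smul, Complex.ofReal_inv, Complex.ofReal_natCast]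
    have hξw : ξ - w ≠ 0 := sub_ne_zero.2 hwξ.symm
    have hn' : (n : ℂ) ≠ 0 := by exact_mod_cast hn.ne'
    field_simp
    linear_combination -hS
  rw [hmean'] at hmean
  exact absurd ((Complex.norm_inv_sub_lt_iff hwξ).1 hmean) (not_lt.2 hw)

theorem Polynomial.polarization_ne_zero {s : Multiset ℂ} (hs : ∀ a ∈ s, ‖a‖ ≤ 1) {q : ℂ[X]}
    (hq : q.natDegree ≤ Multiset.card s) (hq0 : ∀ u : ℂ, ‖u‖ ≤ 1 → q.eval u ≠ 0) :
    q.polarization s ≠ 0 := by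
  induction s using Multiset.induction_on generalizing q with
  | empty =>
    simpa [polarization, Multiset.esymm, coeff_zero_eq_eval_zero] using hq0 0 (by simp)
  | cons a s ih =>
    rw [Multiset.card_cons] at hq
    rw [polarization_cons]
    refine mul_ne_zero (inv_ne_zero (by exact_mod_cast (Multiset.card s).succ_ne_zero)) ?_
    have ha := hs a (Multiset.mem_cons_self a s)
    exact_mod_cast ih (fun b hb => hs b (Multiset.mem_cons_of_mem hb))
      (natDegree_polarDeriv_le a hq) (fun u hu => eval_polarDeriv_ne_zero (Nat.succ_pos _) hq hq0 ha hu)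

theorem exists_multiset_esymm_eq_one (n : ℕ) :
    ∃ ζ : Multiset ℂ, Multiset.card ζ = n ∧ (∀ z ∈ ζ, ‖z‖ ≤ 1) ∧ ∀ k ≤ n, ζ.esymm k = 1 := by
  set P : ℂ[X] := ∑ i ∈ range (n + 1), X ^ i
  have hgeom : P * (X - 1) = X ^ (n + 1) - 1 := geom_sum_mul X (n + 1)
  have hcoeff : ∀ k ≤ n, P.coeff k = 1 := fun k hk => by
    simp [P, finsetSum_coeff, coeff_X_pow, Nat.lt_succ_iff.2 hk]
  have hdeg : P.natDegree = n :=
    le_antisymm (natDegree_sum_le_of_forall_le _ _ fun i hi =>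
        (natDegree_X_pow_le i).trans (Nat.lt_succ_iff.1 (mem_range.1 hi)))
      (le_natDegree_of_ne_zero (by simp [hcoeff n le_rfl]))
  have hcard : Multiset.card P.roots = P.natDegree :=
    splits_iff_card_roots.1 (IsAlgClosed.splits P)
  refine ⟨P.roots.map Neg.neg, by rw [Multiset.card_map, hcard, hdeg], ?_, fun k hk => ?_⟩
  · simp only [Multiset.mem_map, forall_exists_index, and_imp]
    rintro _ ρ hρ rfl
    have hpow : ρ ^ (n + 1) = 1 := by
      have := congrArg (eval ρ) hgeom
      have hroot : P.eval ρ = 0 := (mem_roots'.1 hρ).2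
      simp only [eval_mul, hroot, zero_mul, eval_sub, eval_pow, eval_X, eval_one] at this
      linear_combination -this
    rw [norm_neg, Complex.norm_eq_one_of_pow_eq_one hpow n.succ_ne_zero]
  · have hvieta := coeff_eq_esymm_roots_of_card hcard (k := n - k) (by omega)
    rw [hcoeff _ (Nat.sub_le n k), (monic_geom_sum_X n.succ_ne_zero).leadingCoeff, hdeg,
      Nat.sub_sub_self hk, one_mul] at hvieta
    rw [Multiset.esymm_neg, ← hvieta]

theorem exists_sum_div_choose_eq_sum_mul_pow (n : ℕ) (c : ℕ → ℂ) :
    ∃ ξ : ℂ, ‖ξ‖ ≤ 1 ∧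
      ∑ k ∈ range (n + 1), c k / n.choose k = ∑ k ∈ range (n + 1), c k * ξ ^ k := by
  set v := ∑ k ∈ range (n + 1), c k / n.choose k
  set q : ℂ[X] := ∑ k ∈ range (n + 1), C (c k) * X ^ k - C v
  have hcoeff : ∀ k ≤ n, q.coeff k = c k - if k = 0 then v else 0 := fun k hk => by
    simp [q, finsetSum_coeff, coeff_X_pow, coeff_C, Nat.lt_succ_iff.2 hk]
  obtain ⟨ζ, hcard, hζ, hesymm⟩ := exists_multiset_esymm_eq_one n
  by_contra! hne
  refine q.polarization_ne_zero hζ ?_ (fun u hu => ?_) ?_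
  · rw [hcard]
    refine (natDegree_sub_le _ _).trans (max_le (natDegree_sum_le_of_forall_le _ _ fun k hk =>
      (natDegree_C_mul_X_pow_le (c k) k).trans (Nat.lt_succ_iff.1 (mem_range.1 hk))) ?_)
    simp
  · simpa [q, eval_finsetSum, sub_eq_zero] using (hne u hu).symm
  · have hterm : ∀ k ∈ range (n + 1), q.coeff k / n.choose k * ζ.esymm k =
        c k / n.choose k - if k = 0 then v else 0 := fun k hk => by
      have hk' := Nat.lt_succ_iff.1 (mem_range.1 hk)
      rw [hesymm k hk', hcoeff k hk', mul_one, sub_div]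
      split_ifs with h0 <;> simp [h0]
    rw [polarization, hcard, sum_congr rfl hterm, sum_sub_distrib, sum_ite_eq' _ 0,
      if_pos (by simp), sub_self]

theorem Finset.prod_pow_card_fiber {ι κ M : Type*} [Fintype κ] [DecidableEq κ] [CommMonoid M]
    (s : Finset ι) (g : ι → κ) (f : κ → M) :
    ∏ b, f b ^ #{a ∈ s | g a = b} = ∏ a ∈ s, f (g a) := by
  rw [← prod_fiberwise_of_maps_to (t := univ) (fun a _ => mem_univ (g a))]
  refine prod_congr rfl fun b _ => ?_
  rw [prod_congr rfl fun a ha => congrArg f (mem_filter.1 ha).2, prod_const]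

section SpanningSubgraphs

variable {V E : Type*} [DecidableEq V] (ε₁ ε₂ : E → V)

def subgraphDegree (H : Finset E) (v : V) : ℕ :=
  #{e ∈ H | ε₁ e = v} + #{e ∈ H | ε₂ e = v}

theorem subgraphDegree_mono {H H' : Finset E} (h : H ⊆ H') (v : V) :
    subgraphDegree ε₁ ε₂ H v ≤ subgraphDegree ε₁ ε₂ H' v :=
  add_le_add (card_le_card (filter_subset_filter _ h)) (card_le_card (filter_subset_filter _ h))

theorem subgraphDegree_add_compl [Fintype E] [DecidableEq E] (H : Finset E) (v : V) :
    subgraphDegree ε₁ ε₂ H v + subgraphDegree ε₁ ε₂ Hᶜ v = subgraphDegree ε₁ ε₂ univ v := by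
  have hsplit : ∀ (p : E → Prop) [DecidablePred p], #{e ∈ H | p e} + #{e ∈ Hᶜ | p e} = #{e | p e} :=
    fun p _ => by
      rw [← card_union_of_disjoint (disjoint_filter_filter disjoint_compl_right), ← filter_union,
        union_compl]
  simp only [subgraphDegree]
  linarith [hsplit (ε₁ · = v), hsplit (ε₂ · = v)]

theorem prod_pow_subgraphDegree [Fintype V] {M : Type*} [CommMonoid M] (x : V → M)
    (H : Finset E) : ∏ v, x v ^ subgraphDegree ε₁ ε₂ H v = ∏ e ∈ H, x (ε₁ e) * x (ε₂ e) := by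
  simp only [subgraphDegree, pow_add, prod_mul_distrib, prod_pow_card_fiber]

variable [Fintype V] [Fintype E]

noncomputable def subgraphSum (z : ℂ) : ℂ :=
  ∑ H : Finset E, z ^ #H /
    ∏ v, ((subgraphDegree ε₁ ε₂ univ v).choose (subgraphDegree ε₁ ε₂ H v) : ℂ)

noncomputable def contractedSum (z : ℂ) (S : Finset V) (x : V → ℂ) : ℂ :=
  ∑ H : Finset E, z ^ #H * ∏ v, if v ∈ S then
    (((subgraphDegree ε₁ ε₂ univ v).choose (subgraphDegree ε₁ ε₂ H v) : ℂ))⁻¹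
    else x v ^ subgraphDegree ε₁ ε₂ H v

theorem contractedSum_empty (z : ℂ) (x : V → ℂ) :
    contractedSum ε₁ ε₂ z ∅ x = ∏ e, (1 + z * (x (ε₁ e) * x (ε₂ e))) := by
  simp only [contractedSum, notMem_empty, if_false, prod_pow_subgraphDegree]
  rw [prod_one_add, powerset_univ]
  exact sum_congr rfl fun H _ => by simp only [prod_mul_distrib, prod_const]

theorem contractedSum_univ (z : ℂ) (x : V → ℂ) :
    contractedSum ε₁ ε₂ z univ x = subgraphSum ε₁ ε₂ z := by
  simp [contractedSum, subgraphSum, div_eq_mul_inv, prod_inv_distrib]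

theorem exists_contractedSum_insert_eq (z : ℂ) {S : Finset V} {v : V} (hv : v ∉ S) (x : V → ℂ) :
    ∃ ξ : ℂ, ‖ξ‖ ≤ 1 ∧
      contractedSum ε₁ ε₂ z (insert v S) x = contractedSum ε₁ ε₂ z S (Function.update x v ξ) := by
  set d := subgraphDegree ε₁ ε₂
  set g : Finset E → ℂ := fun H => z ^ #H *
    ∏ u ∈ univ.erase v, if u ∈ S then ((d univ u).choose (d H u) : ℂ)⁻¹ else x u ^ d H u
  have hfiber : ∀ φ : ℕ → ℂ, ∑ H, g H * φ (d H v) =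
      ∑ k ∈ range (d univ v + 1), (∑ H with d H v = k, g H) * φ k := by
    intro φ
    rw [← sum_fiberwise_of_maps_to (g := (d · v)) (t := range (d univ v + 1))
      fun H _ => mem_range.2 (Nat.lt_succ_of_le (subgraphDegree_mono ε₁ ε₂ (subset_univ H) v))]
    refine sum_congr rfl fun k _ => ?_
    rw [sum_mul]
    exact sum_congr rfl fun H hH => by rw [(mem_filter.1 hH).2]
  obtain ⟨ξ, hξ, hcoincide⟩ :=
    exists_sum_div_choose_eq_sum_mul_pow (d univ v) fun k => ∑ H with d H v = k, g H
  refine ⟨ξ, hξ, ?_⟩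
  have hleft : contractedSum ε₁ ε₂ z (insert v S) x =
      ∑ H, g H * ((d univ v).choose (d H v) : ℂ)⁻¹ := by
    refine sum_congr rfl fun H _ => ?_
    rw [← mul_prod_erase univ _ (mem_univ v), if_pos (mem_insert_self v S)]
    rw [prod_congr rfl fun u hu =>
      if_congr (mem_insert.trans (or_iff_right (ne_of_mem_erase hu))) rfl rfl]
    ring
  have hright : contractedSum ε₁ ε₂ z S (Function.update x v ξ) = ∑ H, g H * ξ ^ d H v := by
    refine sum_congr rfl fun H _ => ?_
    rw [← mul_prod_erase univ _ (mem_univ v), if_neg hv, Function.update_self]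
    rw [prod_congr rfl fun u hu => by rw [Function.update_of_ne (ne_of_mem_erase hu)]]
    ring
  rw [hleft, hright, hfiber (fun k => ((d univ v).choose k : ℂ)⁻¹), hfiber (ξ ^ ·)]
  simpa only [div_eq_mul_inv] using hcoincide

theorem contractedSum_ne_zero {z : ℂ} (hz : ‖z‖ < 1) (S : Finset V) {x : V → ℂ}
    (hx : ∀ v, ‖x v‖ ≤ 1) : contractedSum ε₁ ε₂ z S x ≠ 0 := by
  induction S using Finset.induction_on generalizing x with
  | empty =>
    rw [contractedSum_empty]
    refine prod_ne_zero_iff.2 fun e _ h => ?_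
    have hnorm : ‖z * (x (ε₁ e) * x (ε₂ e))‖ < 1 := by
      rw [norm_mul, norm_mul]
      calc ‖z‖ * (‖x (ε₁ e)‖ * ‖x (ε₂ e)‖) ≤ ‖z‖ * 1 := by
            gcongr
            exact mul_le_one₀ (hx _) (norm_nonneg _) (hx _)
        _ < 1 := by rwa [mul_one]
    rw [eq_neg_of_add_eq_zero_right h, norm_neg, norm_one] at hnorm
    exact lt_irrefl 1 hnorm
  | insert v S hv ih =>
    obtain ⟨ξ, hξ, heq⟩ := exists_contractedSum_insert_eq ε₁ ε₂ z hv x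
    rw [heq]
    refine ih fun u => ?_
    rcases eq_or_ne u v with rfl | h
    · simpa using hξ
    · simpa [h] using hx u

theorem subgraphSum_ne_zero {z : ℂ} (hz : ‖z‖ < 1) : subgraphSum ε₁ ε₂ z ≠ 0 := by
  rw [← contractedSum_univ ε₁ ε₂ z 0]
  exact contractedSum_ne_zero ε₁ ε₂ hz univ (by simp)

theorem subgraphSum_eq_pow_mul_subgraphSum_inv [DecidableEq E] {z : ℂ} (hz : z ≠ 0) :
    subgraphSum ε₁ ε₂ z = z ^ Fintype.card E * subgraphSum ε₁ ε₂ z⁻¹ := by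
  rw [subgraphSum, ← Fintype.sum_bijective _ compl_involutive.bijective _ _ fun _ => rfl,
    subgraphSum, mul_sum]
  refine sum_congr rfl fun H _ => ?_
  have hchoose : ∀ v, (subgraphDegree ε₁ ε₂ univ v).choose (subgraphDegree ε₁ ε₂ Hᶜ v) =
      (subgraphDegree ε₁ ε₂ univ v).choose (subgraphDegree ε₁ ε₂ H v) := fun v =>
    Nat.choose_symm_of_eq_add (by rw [add_comm, subgraphDegree_add_compl])
  have hpow : z ^ #Hᶜ = z ^ Fintype.card E * z⁻¹ ^ #H := by
    rw [inv_pow, ← div_eq_mul_inv, eq_div_iff (pow_ne_zero _ hz), ← pow_add, card_compl_add_card]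
  simp only [hchoose, hpow, mul_div_assoc]

end SpanningSubgraphs

/-- Example 4.9: every zero of
`Σ_{H ⊆ E} y^{#H} / Π_v C(deg(G,v), deg(H,v))` has unit modulus. -/
theorem unit_modulus_zeros
    {V E : Type*} [Fintype V] [DecidableEq V] [Fintype E] [DecidableEq E]
    (ε₁ ε₂ : E → V)   -- endpoints of each edge (a loop has ε₁ e = ε₂ e)
    (deg : Finset E → V → ℕ)
    (hdeg : ∀ (H : Finset E) (v : V),
      deg H v = (H.filter fun e => ε₁ e = v).card + (H.filter fun e => ε₂ e = v).card)
    (z : ℂ)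
    (hz : (∑ H : Finset E,
      z ^ H.card / ∏ v : V, ((deg Finset.univ v).choose (deg H v) : ℂ)) = 0) :
    ‖z‖ = 1 := by
  obtain rfl : deg = subgraphDegree ε₁ ε₂ := funext₂ hdeg
  change subgraphSum ε₁ ε₂ z = 0 at hz
  by_contra hne
  rcases lt_or_gt_of_ne hne with hlt | hgt
  · exact subgraphSum_ne_zero ε₁ ε₂ hlt hz
  · have hz0 : z ≠ 0 := norm_pos_iff.1 (one_pos.trans hgt)
    rw [subgraphSum_eq_pow_mul_subgraphSum_inv ε₁ ε₂ hz0, mul_eq_zero] at hz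
    refine subgraphSum_ne_zero ε₁ ε₂ ?_ (hz.resolve_left (pow_ne_zero _ hz0))
    rwa [norm_inv, inv_lt_one₀ (one_pos.trans hgt)]
end
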